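/- arXiv:1910.14381 — 3 statements merged into one kernel-verified Lean document; each statement's English description precedes it below -/
import Mathlib

section
/- Let B = {u₁, …, uₙ} ⊆ ℕ^Σ be a finite set of Parikh vectors and let p ∈ ℕⁿ be a point with p ≠ 0 (some coordinate is nonzero). Then the following is derivable: (⋃_{1≤i≤n} expr(uᵢ))* ≡ expr(Σ_{1≤i≤n} pᵢ·uᵢ)* · ⋃_{1≤i≤n} ( expr(uᵢ)^{<pᵢ} · Π_{j≠i} expr(uⱼ)* ). -/
namespace CKAnote

/-- Commutative regular expressions over an alphabet `α`. -/
inductive CRE (α : Type) where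
  | zero : CRE α
  | one : CRE α
  | letter : α → CRE α
  | mul : CRE α → CRE α → CRE α
  | union : CRE α → CRE α → CRE α
  | star : CRE α → CRE α

variable {α : Type} [Fintype α] [DecidableEq α]

/-- Semantics of a commutative regular expression as a set of Parikh vectors. -/
def sem : CRE α → Set (α → ℕ)
  | .zero => ∅
  | .one => {0}
  | .letter a => {Pi.single a 1}
  | .mul e f => {w | ∃ u ∈ sem e, ∃ v ∈ sem f, w = u + v}
  | .union e f => sem e ∪ sem f
  | .star e => ↑(AddSubmonoid.closure (sem e))

/-- Provable equality: the smallest congruence containing the axioms of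
commutative Kleene algebra (where `e ≤ f` abbreviates `e ∪ f ≡ f`). -/
inductive CKA : CRE α → CRE α → Prop
  | refl (e : CRE α) : CKA e e
  | symm {e f : CRE α} : CKA e f → CKA f e
  | trans {e f g : CRE α} : CKA e f → CKA f g → CKA e g
  | mul_congr {e e' f f' : CRE α} : CKA e e' → CKA f f' → CKA (e.mul f) (e'.mul f')
  | union_congr {e e' f f' : CRE α} : CKA e e' → CKA f f' → CKA (e.union f) (e'.union f')
  | star_congr {e e' : CRE α} : CKA e e' → CKA e.star e'.star
  | mul_assoc (e f g : CRE α) : CKA (e.mul (f.mul g)) ((e.mul f).mul g)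
  | mul_comm (e f : CRE α) : CKA (e.mul f) (f.mul e)
  | one_mul (e : CRE α) : CKA (CRE.one.mul e) e
  | union_assoc (e f g : CRE α) : CKA (e.union (f.union g)) ((e.union f).union g)
  | union_comm (e f : CRE α) : CKA (e.union f) (f.union e)
  | union_idem (e : CRE α) : CKA (e.union e) e
  | zero_union (e : CRE α) : CKA (CRE.zero.union e) e
  | zero_mul (e : CRE α) : CKA (CRE.zero.mul e) CRE.zero
  | left_distrib (e f g : CRE α) : CKA (e.mul (f.union g)) ((e.mul f).union (e.mul g))
  | star_unfold (e : CRE α) : CKA ((CRE.one.union (e.mul e.star)).union e.star) e.star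
  | star_lfp {e f : CRE α} : CKA ((e.mul f).union f) f → CKA ((e.star.mul f).union f) f

/-- `e ≤ f`, i.e. `e ∪ f ≡ f`. -/
def leq (e f : CRE α) : Prop := CKA (e.union f) f

/-- `e^n`, the `n`-fold product of `e` with itself. -/
def pow (e : CRE α) : ℕ → CRE α
  | 0 => CRE.one
  | n + 1 => e.mul (pow e n)

/-- `e^{<n}`, i.e. `(e ∪ 1)^(n-1)` for `n > 0` and `0` for `n = 0`. -/
def ltPow (e : CRE α) : ℕ → CRE α
  | 0 => CRE.zero
  | n + 1 => pow (e.union CRE.one) n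

/-- Finite union of a list of expressions. -/
def unionList : List (CRE α) → CRE α
  | [] => CRE.zero
  | e :: l => e.union (unionList l)

/-- Finite product of a list of expressions. -/
def prodList : List (CRE α) → CRE α
  | [] => CRE.one
  | e :: l => e.mul (prodList l)

/-- `expr(u)`: the product over `a ∈ α` of `u a` copies of the letter `a`. -/
noncomputable def exprVec (u : α → ℕ) : CRE α :=
  prodList ((Finset.univ : Finset α).toList.map (fun a => pow (CRE.letter a) (u a)))

/-- The union `⋃_{b ∈ B} expr(b)` for a finite set of Parikh vectors `B`. -/
noncomputable def unionVecs (B : Finset (α → ℕ)) : CRE α :=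
  unionList (B.toList.map exprVec)

/-- The linear expression `expr(u) · (⋃_{b ∈ B} expr(b))*`. -/
noncomputable def linExpr (u : α → ℕ) (B : Finset (α → ℕ)) : CRE α :=
  (exprVec u).mul (unionVecs B).star

/-- A finite set of Parikh vectors is independent when every Parikh vector
admits at most one representation as an `ℕ`-linear combination of its elements. -/
def Independent (B : Finset (α → ℕ)) : Prop :=
  ∀ c d : (α → ℕ) → ℕ, (∑ b ∈ B, c b • b) = (∑ b ∈ B, d b • b) → ∀ b ∈ B, c b = d b

/-- The semilinear expression associated to a list of linear data:
the finite union of the corresponding linear expressions. -/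
noncomputable def semiLin (L : List ((α → ℕ) × Finset (α → ℕ))) : CRE α :=
  unionList (L.map (fun p => linExpr p.1 p.2))

/-- The dimension of a semilinear expression: the maximum of the dimensions
of its linear components. -/
def dimSL (L : List ((α → ℕ) × Finset (α → ℕ))) : ℕ :=
  (L.map (fun p => p.2.card)).foldr max 0

/-- Finitary (star-free) expressions. -/
def NoStar : CRE α → Prop
  | .zero => True
  | .one => True
  | .letter _ => True
  | .mul e f => NoStar e ∧ NoStar f
  | .union e f => NoStar e ∧ NoStar f
  | .star _ => False

/-- Coordinatewise embedding of `ℕ^α` into `ℚ^α`. -/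
def toQ (v : α → ℕ) : α → ℚ := fun a => (v a : ℚ)

end CKAnote

/-!
Provable equality is a congruence, so the expressions modulo `CKA` form a commutative Kleene
algebra `FreeCKA α`, and the claim becomes the identity
`(∑ᵢ xᵢ)∗ = (∏ᵢ xᵢ ^ pᵢ)∗ * ∑ᵢ xᵢ^{<pᵢ} * ∏_{j ≠ i} xⱼ∗` in an arbitrary commutative Kleene
algebra, where `x^{<p} = ∑_{m < p} x ^ m` (idempotence turns `(x + 1) ^ (p - 1)` into this).
The right side is below the left by monotonicity. Conversely, by star induction it suffices
that the right side is at least `1` (take `i` with `pᵢ ≠ 0`) and is closed under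
multiplication by every `xᵢ`. Multiplying the `i`-th summand by `xᵢ` can only leave it through
`xᵢ ^ pᵢ * ∏_{j ≠ i} xⱼ∗`; unrolling every remaining `xⱼ∗ ≤ xⱼ ^ pⱼ * xⱼ∗ + xⱼ^{<pⱼ}` shows that
this term lies either in `(∏ⱼ xⱼ ^ pⱼ) *` the `i`-th summand or in the `j`-th summand for
some `j ≠ i`.
-/

open Finset Computability

namespace CKAnote

class CommKleeneAlgebra (K : Type*) extends KleeneAlgebra K, IdemCommSemiring K

section IdemSemiring

variable {S : Type*} [IdemSemiring S]

theorem sum_le_of_forall_le {ι : Type*} {s : Finset ι} {f : ι → S} {c : S}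
    (h : ∀ i ∈ s, f i ≤ c) : ∑ i ∈ s, f i ≤ c :=
  Finset.sum_induction f (· ≤ c) (fun _ _ => add_le) zero_le h

theorem add_one_pow_eq_geom_sum (x : S) (m : ℕ) :
    (x + 1) ^ m = ∑ i ∈ range (m + 1), x ^ i := by
  rw [(Commute.one_right x).add_pow]
  refine sum_congr rfl fun i hi => ?_
  rw [one_pow, mul_one, natCast_eq_one (Nat.choose_pos (Nat.lt_succ_iff.mp (mem_range.mp hi))).ne',
    mul_one]

theorem one_le_geom_sum (x : S) {p : ℕ} (hp : p ≠ 0) : 1 ≤ ∑ i ∈ range p, x ^ i := by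
  obtain ⟨m, rfl⟩ := Nat.exists_eq_succ_of_ne_zero hp
  rw [geom_sum_succ]
  exact le_add_self

theorem mul_geom_sum_le (x : S) (p : ℕ) :
    x * ∑ i ∈ range p, x ^ i ≤ ∑ i ∈ range p, x ^ i + x ^ p := by
  rw [add_comm, ← geom_sum_succ', geom_sum_succ]
  exact le_self_add

end IdemSemiring

theorem prod_le_prod_mul_prod_add_sum {K ι : Type*} [IdemCommSemiring K] [DecidableEq ι]
    {y a b : ι → K} (s : Finset ι) (hy : ∀ j ∈ s, y j ≤ a j * y j + b j)
    (ha : ∀ j ∈ s, a j * y j ≤ y j) :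
    ∏ j ∈ s, y j ≤ (∏ j ∈ s, a j) * ∏ j ∈ s, y j + ∑ j ∈ s, b j * ∏ l ∈ s.erase j, y l := by
  induction s using Finset.induction_on with
  | empty => simp
  | insert i t hi ih =>
    have ih := ih (fun j hj => hy j (mem_insert_of_mem hj))
      (fun j hj => ha j (mem_insert_of_mem hj))
    have tail : y i * ∑ j ∈ t, b j * ∏ l ∈ t.erase j, y l =
        ∑ j ∈ t, b j * ∏ l ∈ (insert i t).erase j, y l := by
      rw [mul_sum]
      refine sum_congr rfl fun j hj => ?_
      rw [erase_insert_of_ne (ne_of_mem_of_not_mem hj hi).symm,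
        prod_insert (fun h => hi (mem_of_mem_erase h)), mul_left_comm]
    rw [prod_insert hi, prod_insert hi, sum_insert hi, erase_insert hi]
    calc y i * ∏ j ∈ t, y j
        ≤ (a i * y i + b i) * ∏ j ∈ t, y j := mul_le_mul' (hy i (mem_insert_self i t)) le_rfl
      _ = a i * y i * ∏ j ∈ t, y j + b i * ∏ j ∈ t, y j := add_mul _ _ _
      _ ≤ a i * y i * ((∏ j ∈ t, a j) * ∏ j ∈ t, y j + ∑ j ∈ t, b j * ∏ l ∈ t.erase j, y l) +
            b i * ∏ j ∈ t, y j := add_le_add (mul_le_mul' le_rfl ih) le_rfl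
      _ = (a i * ∏ j ∈ t, a j) * (y i * ∏ j ∈ t, y j) +
            a i * y i * ∑ j ∈ t, b j * ∏ l ∈ t.erase j, y l + b i * ∏ j ∈ t, y j := by ring
      _ ≤ (a i * ∏ j ∈ t, a j) * (y i * ∏ j ∈ t, y j) +
            y i * ∑ j ∈ t, b j * ∏ l ∈ t.erase j, y l + b i * ∏ j ∈ t, y j := by
        gcongr; exact ha i (mem_insert_self i t)
      _ = _ := by rw [tail, add_assoc, add_comm (∑ j ∈ t, _)]

section KleeneAlgebra

variable {K : Type*} [KleeneAlgebra K]

theorem geom_sum_le_kstar (x : K) (p : ℕ) : ∑ i ∈ range p, x ^ i ≤ x∗ :=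
  sum_le_of_forall_le fun _ _ => pow_le_kstar

theorem kstar_le_pow_mul_kstar_add_geom_sum (x : K) (p : ℕ) :
    x∗ ≤ x ^ p * x∗ + ∑ i ∈ range p, x ^ i := by
  induction p with
  | zero => simp
  | succ p ih =>
    have unfold : x ^ p * x∗ = x ^ p + x ^ (p + 1) * x∗ := by
      conv_lhs => rw [← one_add_mul_kstar]
      rw [mul_add, mul_one, ← mul_assoc, ← pow_succ]
    exact ih.trans_eq (by rw [unfold, geom_sum_succ']; abel)

end KleeneAlgebra

section CommKleeneAlgebra

variable {K : Type*} [CommKleeneAlgebra K] {ι : Type*}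

theorem prod_le_kstar {s : Finset ι} {f : ι → K} {a : K} (h : ∀ i ∈ s, f i ≤ a∗) :
    ∏ i ∈ s, f i ≤ a∗ :=
  Finset.prod_induction f (· ≤ a∗)
    (fun _ _ hb hc => (mul_le_mul' hb hc).trans (kstar_mul_kstar a).le) one_le_kstar h

theorem mul_prod_kstar_le [DecidableEq ι] {s : Finset ι} (x : ι → K) {i : ι} (hi : i ∈ s) :
    x i * ∏ j ∈ s, (x j)∗ ≤ ∏ j ∈ s, (x j)∗ := by
  rw [← mul_prod_erase s _ hi, ← mul_assoc]
  exact mul_le_mul' mul_kstar_le_kstar le_rfl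

variable [Fintype ι] (x : ι → K) (p : ι → ℕ)

theorem kstar_le_kstar_sum (i : ι) : (x i)∗ ≤ (∑ j, x j)∗ :=
  kstar_mono (single_le_sum (fun _ _ => zero_le) (mem_univ i))

theorem prod_pow_le_kstar_sum : ∏ i, x i ^ p i ≤ (∑ j, x j)∗ :=
  prod_le_kstar fun i _ => pow_le_kstar.trans (kstar_le_kstar_sum x i)

variable [DecidableEq ι]

-- `xᵢ^{<pᵢ} * ∏_{j ≠ i} xⱼ∗`: read on Parikh vectors, the combinations of the `xⱼ` whose
-- `i`-th coefficient is below `p i`.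
def sector (i : ι) : K := (∑ m ∈ range (p i), x i ^ m) * ∏ j ∈ univ.erase i, (x j)∗

theorem sector_le_kstar_sum (i : ι) : sector x p i ≤ (∑ j, x j)∗ :=
  (mul_le_mul' ((geom_sum_le_kstar _ _).trans (kstar_le_kstar_sum x i))
    (prod_le_kstar fun j _ => kstar_le_kstar_sum x j)).trans (kstar_mul_kstar _).le

theorem one_le_sector {i : ι} (hi : p i ≠ 0) : 1 ≤ sector x p i :=
  one_le_mul (one_le_geom_sum _ hi) (one_le_prod' fun _ _ => one_le_kstar)

theorem mul_sector_le_of_ne {i k : ι} (h : i ≠ k) : x i * sector x p k ≤ sector x p k := by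
  rw [sector, mul_left_comm]
  exact mul_le_mul' le_rfl (mul_prod_kstar_le x (mem_erase.mpr ⟨h, mem_univ i⟩))

theorem mul_sector_self_le (i : ι) :
    x i * sector x p i ≤ (∏ j, x j ^ p j) * sector x p i + ∑ j, sector x p j := by
  rcases eq_or_ne (p i) 0 with hi | hi
  · simp [sector, hi]
  set G : ι → K := fun j => ∑ m ∈ range (p j), x j ^ m
  set Y := ∏ j ∈ univ.erase i, (x j)∗
  have expand := prod_le_prod_mul_prod_add_sum (univ.erase i) (y := fun j => (x j)∗)
    (a := fun j => x j ^ p j) (b := G) (fun j _ => kstar_le_pow_mul_kstar_add_geom_sum _ _)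
    (fun j _ => (mul_le_mul' pow_le_kstar le_rfl).trans (kstar_mul_kstar _).le)
  have absorb : ∀ j ∈ univ.erase i,
      x i ^ p i * (G j * ∏ l ∈ (univ.erase i).erase j, (x l)∗) ≤ sector x p j := by
    intro j hj
    rw [mul_left_comm, sector, erase_right_comm,
      ← mul_prod_erase (univ.erase j) _ (mem_erase.mpr ⟨(ne_of_mem_erase hj).symm, mem_univ i⟩)]
    exact mul_le_mul' le_rfl (mul_le_mul' pow_le_kstar le_rfl)
  calc x i * sector x p i = x i * G i * Y := (mul_assoc _ _ _).symm
    _ ≤ (G i + x i ^ p i) * Y := mul_le_mul' (mul_geom_sum_le _ _) le_rfl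
    _ = sector x p i + x i ^ p i * Y := add_mul _ _ _
    _ ≤ sector x p i + x i ^ p i * ((∏ j ∈ univ.erase i, x j ^ p j) * Y +
          ∑ j ∈ univ.erase i, G j * ∏ l ∈ (univ.erase i).erase j, (x l)∗) :=
      add_le_add le_rfl (mul_le_mul' le_rfl expand)
    _ = sector x p i + (∏ j, x j ^ p j) * Y +
          ∑ j ∈ univ.erase i, x i ^ p i * (G j * ∏ l ∈ (univ.erase i).erase j, (x l)∗) := by
      rw [mul_add, ← mul_assoc, mul_prod_erase univ (fun j => x j ^ p j) (mem_univ i), mul_sum,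
        add_assoc]
    _ ≤ sector x p i + (∏ j, x j ^ p j) * sector x p i + ∑ j ∈ univ.erase i, sector x p j := by
      gcongr with j hj
      · exact le_mul_of_one_le_left' (one_le_geom_sum _ hi)
      · exact absorb j hj
    _ = _ := by rw [← add_sum_erase univ _ (mem_univ i)]; abel

theorem kstar_sum_eq_kstar_prod_pow_mul_sum_sector (hp : p ≠ 0) :
    (∑ i, x i)∗ = (∏ i, x i ^ p i)∗ * ∑ i, sector x p i := by
  set w := ∏ i, x i ^ p i
  set P := ∑ i, sector x p i
  have sector_le_P : ∀ i, sector x p i ≤ P :=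
    fun i => single_le_sum (fun _ _ => zero_le) (mem_univ i)
  have P_le : P ≤ w∗ * P := le_mul_of_one_le_left' one_le_kstar
  have mul_sector_le : ∀ i k, x i * sector x p k ≤ w∗ * P := by
    intro i k
    rcases eq_or_ne i k with rfl | hik
    · refine (mul_sector_self_le x p i).trans (add_le ?_ P_le)
      exact mul_le_mul' le_kstar (sector_le_P i)
    · exact (mul_sector_le_of_ne x p hik).trans ((sector_le_P k).trans P_le)
  have sum_mul_le : (∑ i, x i) * P ≤ w∗ * P :=
    calc (∑ i, x i) * P = ∑ i, ∑ k, x i * sector x p k := by simp only [P, sum_mul_sum]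
      _ ≤ w∗ * P := sum_le_of_forall_le fun i _ => sum_le_of_forall_le fun k _ => mul_sector_le i k
  refine le_antisymm (kstar_le_of_mul_le_right ?_ ?_) ?_
  · obtain ⟨k, hk⟩ := Function.ne_iff.mp hp
    exact one_le_mul one_le_kstar ((one_le_sector x p hk).trans (sector_le_P k))
  · calc (∑ i, x i) * (w∗ * P) = w∗ * ((∑ i, x i) * P) := mul_left_comm _ _ _
      _ ≤ w∗ * (w∗ * P) := mul_le_mul' le_rfl sum_mul_le
      _ = w∗ * P := by rw [← mul_assoc, kstar_mul_kstar]
  · calc w∗ * P ≤ (∑ i, x i)∗∗ * (∑ i, x i)∗ :=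
          mul_le_mul' (kstar_mono (prod_pow_le_kstar_sum x p))
            (sum_le_of_forall_le fun i _ => sector_le_kstar_sum x p i)
      _ = (∑ i, x i)∗ := by rw [kstar_idem, kstar_mul_kstar]

end CommKleeneAlgebra

instance CKA.setoid (α : Type) : Setoid (CRE α) := ⟨CKA, ⟨CKA.refl, CKA.symm, CKA.trans⟩⟩

def FreeCKA (α : Type) : Type := Quotient (CKA.setoid α)

namespace FreeCKA

variable {α : Type}

def mk : CRE α → FreeCKA α := Quotient.mk _

theorem mk_eq_mk {e f : CRE α} : mk e = mk f ↔ CKA e f := Quotient.eq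

instance : Zero (FreeCKA α) := ⟨mk .zero⟩
instance : One (FreeCKA α) := ⟨mk .one⟩
instance : Add (FreeCKA α) := ⟨Quotient.map₂ CRE.union fun _ _ h₁ _ _ h₂ => CKA.union_congr h₁ h₂⟩
instance : Mul (FreeCKA α) := ⟨Quotient.map₂ CRE.mul fun _ _ h₁ _ _ h₂ => CKA.mul_congr h₁ h₂⟩
instance : KStar (FreeCKA α) := ⟨Quotient.map CRE.star fun _ _ => CKA.star_congr⟩

theorem mk_one : mk (.one : CRE α) = 1 := rfl
theorem mk_union (e f : CRE α) : mk (e.union f) = mk e + mk f := rfl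
theorem mk_mul (e f : CRE α) : mk (e.mul f) = mk e * mk f := rfl
theorem mk_star (e : CRE α) : mk e.star = (mk e)∗ := rfl

instance : CommSemiring (FreeCKA α) where
  add_assoc := by rintro ⟨e⟩ ⟨f⟩ ⟨g⟩; exact Quotient.sound (CKA.union_assoc e f g).symm
  zero_add := by rintro ⟨e⟩; exact Quotient.sound (CKA.zero_union e)
  add_zero := by rintro ⟨e⟩; exact Quotient.sound ((CKA.union_comm e _).trans (CKA.zero_union e))
  add_comm := by rintro ⟨e⟩ ⟨f⟩; exact Quotient.sound (CKA.union_comm e f)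
  mul_assoc := by rintro ⟨e⟩ ⟨f⟩ ⟨g⟩; exact Quotient.sound (CKA.mul_assoc e f g).symm
  one_mul := by rintro ⟨e⟩; exact Quotient.sound (CKA.one_mul e)
  mul_one := by rintro ⟨e⟩; exact Quotient.sound ((CKA.mul_comm e _).trans (CKA.one_mul e))
  zero_mul := by rintro ⟨e⟩; exact Quotient.sound (CKA.zero_mul e)
  mul_zero := by rintro ⟨e⟩; exact Quotient.sound ((CKA.mul_comm e _).trans (CKA.zero_mul e))
  left_distrib := by rintro ⟨e⟩ ⟨f⟩ ⟨g⟩; exact Quotient.sound (CKA.left_distrib e f g)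
  right_distrib := by
    rintro ⟨e⟩ ⟨f⟩ ⟨g⟩
    exact Quotient.sound ((CKA.mul_comm _ g).trans ((CKA.left_distrib g e f).trans
      (CKA.union_congr (CKA.mul_comm g e) (CKA.mul_comm g f))))
  mul_comm := by rintro ⟨e⟩ ⟨f⟩; exact Quotient.sound (CKA.mul_comm e f)
  nsmul := nsmulRec

instance : IdemCommSemiring (FreeCKA α) where
  __ := IdemSemiring.ofSemiring (α := FreeCKA α) fun a =>
    Quotient.inductionOn a fun e => Quotient.sound (CKA.union_idem e)
  mul_comm := mul_comm

theorem mk_le_mk {e f : CRE α} : mk e ≤ mk f ↔ CKA (e.union f) f := mk_eq_mk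

theorem one_add_mul_kstar_le (a : FreeCKA α) : 1 + a * a∗ ≤ a∗ := by
  induction a using Quotient.ind with | _ e => exact mk_le_mk.mpr (CKA.star_unfold e)

theorem kstar_mul_le_of_mul_le {a b : FreeCKA α} : a * b ≤ b → a∗ * b ≤ b := by
  induction a using Quotient.ind with | _ e =>
  induction b using Quotient.ind with | _ f =>
  exact fun h => mk_le_mk.mpr (CKA.star_lfp (mk_le_mk.mp h))

instance : CommKleeneAlgebra (FreeCKA α) where
  one_le_kstar a := le_self_add.trans (one_add_mul_kstar_le a)
  mul_kstar_le_kstar a := le_add_self.trans (one_add_mul_kstar_le a)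
  kstar_mul_le_kstar a := (mul_comm _ a).le.trans (le_add_self.trans (one_add_mul_kstar_le a))
  mul_kstar_le_self a b h := by
    rw [mul_comm] at h ⊢
    exact kstar_mul_le_of_mul_le h
  kstar_mul_le_self _ _ := kstar_mul_le_of_mul_le

theorem mk_unionList (l : List (CRE α)) : mk (unionList l) = (l.map mk).sum := by
  induction l with
  | nil => rfl
  | cons e l ih => rw [unionList, mk_union, ih, List.map_cons, List.sum_cons]

theorem mk_prodList (l : List (CRE α)) : mk (prodList l) = (l.map mk).prod := by
  induction l with
  | nil => rfl
  | cons e l ih => rw [prodList, mk_mul, ih, List.map_cons, List.prod_cons]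

theorem mk_pow (e : CRE α) (n : ℕ) : mk (pow e n) = mk e ^ n := by
  induction n with
  | zero => rfl
  | succ n ih => rw [pow, mk_mul, ih, pow_succ']

theorem mk_ltPow (e : CRE α) (n : ℕ) : mk (ltPow e n) = ∑ i ∈ range n, mk e ^ i := by
  cases n with
  | zero => rfl
  | succ n => rw [ltPow, mk_pow, mk_union, mk_one, add_one_pow_eq_geom_sum]

theorem mk_exprVec [Fintype α] (u : α → ℕ) : mk (exprVec u) = ∏ a, mk (.letter a) ^ u a := by
  rw [exprVec, mk_prodList, List.map_map, prod_map_toList]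
  simp only [Function.comp_apply, mk_pow]

theorem mk_exprVec_sum_smul [Fintype α] {ι : Type*} (s : Finset ι) (p : ι → ℕ) (u : ι → α → ℕ) :
    mk (exprVec (∑ i ∈ s, p i • u i)) = ∏ i ∈ s, mk (exprVec (u i)) ^ p i := by
  simp only [mk_exprVec, ← prod_pow, ← pow_mul]
  rw [prod_comm]
  simp only [Finset.sum_apply, Pi.smul_apply, smul_eq_mul, mul_comm, prod_pow_eq_pow_sum]

end FreeCKA

theorem prod_map_filter_finRange_ne {M : Type*} [CommMonoid M] {n : ℕ} (f : Fin n → M) (i : Fin n) :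
    (((List.finRange n).filter fun j => j ≠ i).map f).prod = ∏ j ∈ univ.erase i, f j := by
  rw [← List.prod_toFinset f ((List.nodup_finRange n).filter _), List.toFinset_filter,
    List.toFinset_finRange]
  simp [filter_ne']

variable {α : Type} [Fintype α] [DecidableEq α]

set_option linter.unusedSectionVars false in
/-- For `B = {u₁, …, uₙ}` and a nonzero point `p ∈ ℕⁿ`:
`(⋃ᵢ expr(uᵢ))* ≡ expr(Σᵢ pᵢ·uᵢ)* · ⋃ᵢ (expr(uᵢ)^{<pᵢ} · Πⱼ≠ᵢ expr(uⱼ)*)`. -/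
theorem base_vector (n : ℕ) (u : Fin n → α → ℕ) (p : Fin n → ℕ) (hp : p ≠ 0) :
    CKA (unionList ((List.finRange n).map (fun i => exprVec (u i)))).star
      ((exprVec (∑ i, p i • u i)).star.mul
        (unionList ((List.finRange n).map (fun i =>
          (ltPow (exprVec (u i)) (p i)).mul
            (prodList (((List.finRange n).filter (fun j => j ≠ i)).map
              (fun j => (exprVec (u j)).star))))))) := by
  rw [← FreeCKA.mk_eq_mk]
  simp only [FreeCKA.mk_star, FreeCKA.mk_mul, FreeCKA.mk_unionList, FreeCKA.mk_prodList,
    FreeCKA.mk_ltPow, FreeCKA.mk_exprVec_sum_smul, List.map_map, Function.comp_def,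
    prod_map_filter_finRange_ne, ← Fin.sum_univ_def]
  exact kstar_sum_eq_kstar_prod_pow_mul_sum_sector _ p hp

end CKAnote
end

section
/- A finite set B of Parikh vectors in ℕ^Σ is independent (every Parikh vector admits at most one representation as an ℕ-linear combination of the elements of B) if and only if the images of the elements of B under the coordinatewise embedding ℕ^Σ → ℚ^Σ form a linearly independent family in the ℚ-vector space ℚ^Σ. -/
namespace CKAnote

variable {α : Type} [Fintype α] [DecidableEq α]

/-! `Independent B` is `ℕ`-linear independence in the semiring sense. An integer relation is a
difference of two `ℕ`-combinations, so this agrees with `ℤ`-linear independence once the vectors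
sit in a group, and `ℤ`-independence passes to `ℚ` by clearing denominators. -/

theorem linearIndependent_nat_iff_int {ι M : Type*} [AddCommGroup M] {v : ι → M} :
    LinearIndependent ℕ v ↔ LinearIndependent ℤ v := by
  refine ⟨fun hv => ?_, LinearIndependent.restrict_scalars' ℕ⟩
  rw [linearIndependent_iff'ₛ] at hv
  rw [linearIndependent_iff']
  intro s g hg i hi
  have hsplit (n : ℤ) (x : M) : n • x = n.toNat • x - (-n).toNat • x := by
    rw [← natCast_zsmul, ← natCast_zsmul, ← sub_smul, Int.toNat_sub_toNat_neg]
  have hparts := hv s (fun i => (g i).toNat) (fun i => (-g i).toNat) (by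
    rw [← sub_eq_zero, ← Finset.sum_sub_distrib, ← hg]
    exact Finset.sum_congr rfl fun i _ => (hsplit _ _).symm) i hi
  omega

theorem independent_iff_linearIndepOn {α : Type} (B : Finset (α → ℕ)) :
    Independent B ↔ LinearIndepOn ℕ id (B : Set (α → ℕ)) :=
  linearIndepOn_finset_iffₛ.symm

theorem linearIndepOn_toQ_iff {α : Type} (B : Set (α → ℕ)) :
    LinearIndepOn ℕ toQ B ↔ LinearIndepOn ℕ id B :=
  (Nat.castAddMonoidHom ℚ).toNatLinearMap.compLeft α |>.linearIndepOn_iff_of_injOn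
    Nat.cast_injective.comp_left.injOn

/-- A finite set of Parikh vectors is independent iff its image under the
coordinatewise embedding `ℕ^α → ℚ^α` is linearly independent over `ℚ`. -/
theorem independent_iff_linearIndependent (B : Finset (α → ℕ)) :
    Independent B ↔
      LinearIndependent ℚ (fun b : ↥B => toQ (b : α → ℕ)) := by
  rw [independent_iff_linearIndepOn, ← linearIndepOn_toQ_iff]
  exact linearIndependent_nat_iff_int.trans (LinearIndependent.iff_fractionRing ℤ ℚ)

end CKAnote
end

section
/- Every commutative regular expression is provably equal (with respect to ≡) to a semilinear expression, i.e. a finite union of linear expressions. -/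
/-!
Induction on the expression: semilinear expressions contain `0`, `1` and the letters and are
closed under the operations. Unions are concatenations of lists. Products distribute over unions,
and a product of linear expressions is linear since `expr(u)·expr(v) ≡ expr(u + v)` and, by
commutativity, `(e ∪ f)* ≡ e*·f*`. The same identity turns the star of a union into a product of
stars of linear expressions, and `(a·b*)* ≡ 1 ∪ a·(a ∪ b)*` shows that
`(expr(u)·B*)* ≡ 1 ∪ expr(u)·({u} ∪ B)*` is semilinear.
-/

namespace CKAnote

variable {α : Type}

local infix:50 " ≡ " => CKA
local infix:50 " ≤ₖ " => leq

namespace CKA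

instance : @Trans (CRE α) (CRE α) (CRE α) CKA CKA CKA := ⟨CKA.trans⟩

theorem mul_one (e : CRE α) : e.mul .one ≡ e := (CKA.mul_comm _ _).trans (CKA.one_mul e)

theorem mul_zero (e : CRE α) : e.mul .zero ≡ .zero := (CKA.mul_comm _ _).trans (CKA.zero_mul e)

theorem union_zero (e : CRE α) : e.union .zero ≡ e :=
  (CKA.union_comm _ _).trans (CKA.zero_union e)

theorem right_distrib (e f g : CRE α) : (e.union f).mul g ≡ (e.mul g).union (f.mul g) := calc
  (e.union f).mul g ≡ (g.mul e).union (g.mul f) := (CKA.mul_comm _ _).trans (left_distrib g e f)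
  _ ≡ (e.mul g).union (f.mul g) := union_congr (CKA.mul_comm _ _) (CKA.mul_comm _ _)

theorem mul_left_comm (e f g : CRE α) : e.mul (f.mul g) ≡ f.mul (e.mul g) := calc
  e.mul (f.mul g) ≡ (e.mul f).mul g := CKA.mul_assoc e f g
  _ ≡ (f.mul e).mul g := mul_congr (CKA.mul_comm e f) (refl g)
  _ ≡ f.mul (e.mul g) := (CKA.mul_assoc f e g).symm

theorem mul_mul_mul_comm (e f g h : CRE α) :
    (e.mul f).mul (g.mul h) ≡ (e.mul g).mul (f.mul h) := calc
  (e.mul f).mul (g.mul h) ≡ e.mul (f.mul (g.mul h)) := (CKA.mul_assoc e f _).symm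
  _ ≡ e.mul (g.mul (f.mul h)) := mul_congr (refl e) (CKA.mul_left_comm f g h)
  _ ≡ (e.mul g).mul (f.mul h) := CKA.mul_assoc e g _

theorem leq {e f : CRE α} (h : e ≡ f) : e ≤ₖ f := (union_congr h (refl f)).trans (union_idem f)

end CKA

namespace leq

theorem congr {e e' f f' : CRE α} (he : e ≡ e') (hf : f ≡ f') (h : e ≤ₖ f) : e' ≤ₖ f' :=
  (CKA.union_congr he.symm hf.symm).trans (h.trans hf)

theorem trans {e f g : CRE α} (h₁ : e ≤ₖ f) (h₂ : f ≤ₖ g) : e ≤ₖ g := calc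
  e.union g ≡ e.union (f.union g) := CKA.union_congr (.refl e) h₂.symm
  _ ≡ (e.union f).union g := CKA.union_assoc _ _ _
  _ ≡ f.union g := CKA.union_congr h₁ (.refl g)
  _ ≡ g := h₂

theorem antisymm {e f : CRE α} (h₁ : e ≤ₖ f) (h₂ : f ≤ₖ e) : e ≡ f :=
  h₂.symm.trans ((CKA.union_comm _ _).trans h₁)

instance : @Trans (CRE α) (CRE α) (CRE α) leq leq leq := ⟨leq.trans⟩
instance : @Trans (CRE α) (CRE α) (CRE α) CKA leq leq := ⟨fun h₁ h₂ => h₁.leq.trans h₂⟩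

end leq

theorem leq_union_left (e f : CRE α) : e ≤ₖ e.union f :=
  (CKA.union_assoc _ _ _).trans (.union_congr (.union_idem e) (.refl f))

theorem leq_union_right (e f : CRE α) : f ≤ₖ e.union f :=
  (leq_union_left f e).congr (.refl f) (.union_comm f e)

theorem union_leq {e f g : CRE α} (h₁ : e ≤ₖ g) (h₂ : f ≤ₖ g) : e.union f ≤ₖ g :=
  (CKA.union_assoc e f g).symm.trans ((CKA.union_congr (.refl e) h₂).trans h₁)

theorem zero_leq (e : CRE α) : .zero ≤ₖ e := .zero_union e

theorem mul_leq_mul_right {e f : CRE α} (h : e ≤ₖ f) (g : CRE α) : e.mul g ≤ₖ f.mul g :=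
  (CKA.right_distrib e f g).symm.trans (.mul_congr h (.refl g))

theorem mul_leq_mul_left {f g : CRE α} (h : f ≤ₖ g) (e : CRE α) : e.mul f ≤ₖ e.mul g :=
  (CKA.left_distrib e f g).symm.trans (.mul_congr (.refl e) h)

theorem mul_leq_mul {e e' f f' : CRE α} (he : e ≤ₖ e') (hf : f ≤ₖ f') :
    e.mul f ≤ₖ e'.mul f' :=
  (mul_leq_mul_right he f).trans (mul_leq_mul_left hf e')

theorem leq_mul_of_one_leq {f : CRE α} (h : .one ≤ₖ f) (e : CRE α) : e ≤ₖ e.mul f :=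
  (mul_leq_mul_left h e).congr (.mul_one e) (.refl _)

theorem one_leq_star (e : CRE α) : .one ≤ₖ e.star :=
  (leq_union_left _ _).trans ((leq_union_left _ _).trans (CKA.star_unfold e).leq)

theorem mul_star_leq_star (e : CRE α) : e.mul e.star ≤ₖ e.star :=
  (leq_union_right _ _).trans ((leq_union_left _ _).trans (CKA.star_unfold e).leq)

theorem leq_star (e : CRE α) : e ≤ₖ e.star :=
  (leq_mul_of_one_leq (one_leq_star e) e).trans (mul_star_leq_star e)

theorem star_leq_of_mul_leq {e f : CRE α} (h₁ : .one ≤ₖ f) (h₂ : e.mul f ≤ₖ f) : e.star ≤ₖ f :=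
  (leq_mul_of_one_leq h₁ e.star).trans (CKA.star_lfp h₂)

theorem star_mul_star_leq_star (e : CRE α) : e.star.mul e.star ≤ₖ e.star :=
  CKA.star_lfp (mul_star_leq_star e)

theorem star_leq_star {e f : CRE α} (h : e ≤ₖ f) : e.star ≤ₖ f.star :=
  star_leq_of_mul_leq (one_leq_star f) ((mul_leq_mul_right h _).trans (mul_star_leq_star f))

theorem CKA.star_zero : (CRE.zero : CRE α).star ≡ .one :=
  leq.antisymm (star_leq_of_mul_leq (.union_idem _) ((CKA.zero_mul _).leq.trans (zero_leq _)))
    (one_leq_star _)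

theorem CKA.star_union (e f : CRE α) : (e.union f).star ≡ e.star.mul f.star := by
  set s := e.star.mul f.star
  have he : e.mul s ≤ₖ s :=
    (mul_leq_mul_right (mul_star_leq_star e) _).congr (CKA.mul_assoc _ _ _).symm (.refl _)
  have hf : f.mul s ≤ₖ s :=
    (mul_leq_mul_left (mul_star_leq_star f) _).congr (.mul_left_comm _ _ _) (.refl _)
  refine leq.antisymm (star_leq_of_mul_leq ?_ ?_) ?_
  · exact (mul_leq_mul (one_leq_star e) (one_leq_star f)).congr (.mul_one _) (.refl _)
  · exact (CKA.right_distrib e f s).leq.trans (union_leq he hf)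
  · exact (mul_leq_mul (star_leq_star (leq_union_left e f))
      (star_leq_star (leq_union_right e f))).trans (star_mul_star_leq_star _)

theorem CKA.star_mul_star (a b : CRE α) :
    (a.mul b.star).star ≡ CRE.one.union (a.mul (a.union b).star) := by
  set s := (a.union b).star
  set t := (a.mul b.star).star
  have hbs : b.star ≤ₖ s := star_leq_star (leq_union_right a b)
  have has : a.mul s ≤ₖ s := (mul_leq_mul_right (leq_union_left a b) s).trans (mul_star_leq_star _)
  have hstep : (a.mul b.star).mul (CRE.one.union (a.mul s)) ≤ₖ CRE.one.union (a.mul s) := by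
    refine (CKA.left_distrib _ _ _).leq.trans ((union_leq ?_ ?_).trans (leq_union_right _ _))
    · exact (CKA.mul_one _).leq.trans (mul_leq_mul_left hbs a)
    · calc (a.mul b.star).mul (a.mul s) ≡ a.mul (b.star.mul (a.mul s)) := (CKA.mul_assoc _ _ _).symm
        _ ≤ₖ a.mul (s.mul s) := mul_leq_mul_left (mul_leq_mul hbs has) a
        _ ≤ₖ a.mul s := mul_leq_mul_left (star_mul_star_leq_star _) a
  -- `a·t ≤ a·b*·t ≤ t` because `1 ≤ b*`; hence `a*·t ≤ t`, which absorbs `a·s ≡ a*·(a·b*)`.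
  have hat : a.star.mul t ≤ₖ t :=
    CKA.star_lfp ((mul_leq_mul_right (leq_mul_of_one_leq (one_leq_star b) a) t).trans
      (mul_star_leq_star _))
  have hback : a.mul s ≤ₖ t := calc
    a.mul s ≡ a.mul (a.star.mul b.star) := .mul_congr (.refl a) (.star_union a b)
    _ ≡ a.star.mul (a.mul b.star) := .mul_left_comm _ _ _
    _ ≤ₖ a.star.mul t := mul_leq_mul_left (leq_star _) _
    _ ≤ₖ t := hat
  exact leq.antisymm (star_leq_of_mul_leq (leq_union_left _ _) hstep)
    (union_leq (one_leq_star _) hback)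

theorem prodList_map_congr {β : Type} {l : List β} {f g : β → CRE α}
    (h : ∀ b ∈ l, f b ≡ g b) : prodList (l.map f) ≡ prodList (l.map g) := by
  induction l with
  | nil => exact .refl _
  | cons b l ih =>
    exact .mul_congr (h b List.mem_cons_self) (ih fun c hc => h c (List.mem_cons_of_mem _ hc))

theorem prodList_map_eq_one {β : Type} {l : List β} {f : β → CRE α}
    (h : ∀ b ∈ l, f b ≡ .one) : prodList (l.map f) ≡ .one := by
  induction l with
  | nil => exact .refl _
  | cons b l ih =>
    exact (CKA.mul_congr (h b List.mem_cons_self)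
      (ih fun c hc => h c (List.mem_cons_of_mem _ hc))).trans (.one_mul _)

theorem prodList_map_mul {β : Type} (l : List β) (f g : β → CRE α) :
    prodList (l.map fun b => (f b).mul (g b)) ≡ (prodList (l.map f)).mul (prodList (l.map g)) := by
  induction l with
  | nil => exact (CKA.one_mul _).symm
  | cons b l ih => exact (CKA.mul_congr (.refl _) ih).trans (.mul_mul_mul_comm _ _ _ _)

theorem prodList_map_of_eq_one_of_ne {β : Type} {l : List β} (hl : l.Nodup) {f : β → CRE α}
    {a : β} (ha : a ∈ l) (h : ∀ b ∈ l, b ≠ a → f b ≡ .one) : prodList (l.map f) ≡ f a := by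
  induction l with
  | nil => cases ha
  | cons b l ih =>
    obtain ⟨hbl, hl⟩ := List.nodup_cons.mp hl
    rcases List.mem_cons.mp ha with rfl | ha
    · refine (CKA.mul_congr (.refl _) (prodList_map_eq_one fun c hc => ?_)).trans (.mul_one _)
      exact h c (List.mem_cons_of_mem _ hc) (by rintro rfl; exact hbl hc)
    · have hba : b ≠ a := by rintro rfl; exact hbl ha
      exact (CKA.mul_congr (h b List.mem_cons_self hba)
        (ih hl ha fun c hc => h c (List.mem_cons_of_mem _ hc))).trans (.one_mul _)

theorem pow_add (e : CRE α) (m n : ℕ) : pow e (m + n) ≡ (pow e m).mul (pow e n) := by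
  induction m with
  | zero => rw [Nat.zero_add]; exact (CKA.one_mul _).symm
  | succ m ih =>
    rw [Nat.add_right_comm]
    exact (CKA.mul_congr (.refl e) ih).trans (.mul_assoc _ _ _)

theorem unionList_append (l₁ l₂ : List (CRE α)) :
    unionList (l₁ ++ l₂) ≡ (unionList l₁).union (unionList l₂) := by
  induction l₁ with
  | nil => exact (CKA.zero_union _).symm
  | cons e l ih => exact (CKA.union_congr (.refl e) ih).trans (.union_assoc _ _ _)

theorem leq_unionList {l : List (CRE α)} {e : CRE α} (h : e ∈ l) : e ≤ₖ unionList l := by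
  induction l with
  | nil => cases h
  | cons f l ih =>
    rcases List.mem_cons.mp h with rfl | h
    · exact leq_union_left _ _
    · exact (ih h).trans (leq_union_right _ _)

theorem unionList_leq {l : List (CRE α)} {f : CRE α} (h : ∀ e ∈ l, e ≤ₖ f) :
    unionList l ≤ₖ f := by
  induction l with
  | nil => exact zero_leq f
  | cons e l ih =>
    exact union_leq (h e List.mem_cons_self) (ih fun c hc => h c (List.mem_cons_of_mem _ hc))

section Parikh

variable [Fintype α]

theorem exprVec_zero : exprVec (0 : α → ℕ) ≡ .one := prodList_map_eq_one fun _ _ => .refl _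

theorem exprVec_add (u v : α → ℕ) : exprVec (u + v) ≡ (exprVec u).mul (exprVec v) :=
  (prodList_map_congr fun a _ => pow_add (.letter a) (u a) (v a)).trans (prodList_map_mul _ _ _)

theorem exprVec_single [DecidableEq α] (a : α) : exprVec (Pi.single a 1) ≡ .letter a := by
  refine (prodList_map_of_eq_one_of_ne (Finset.nodup_toList _)
    (Finset.mem_toList.mpr (Finset.mem_univ a)) fun b _ hb => ?_).trans ?_
  · rw [Pi.single_eq_of_ne hb]
    exact .refl _
  · rw [Pi.single_eq_same]
    exact .mul_one _

theorem leq_unionVecs {b : α → ℕ} {B : Finset (α → ℕ)} (h : b ∈ B) :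
    exprVec b ≤ₖ unionVecs B :=
  leq_unionList (List.mem_map_of_mem (Finset.mem_toList.mpr h))

theorem unionVecs_leq {B : Finset (α → ℕ)} {f : CRE α} (h : ∀ b ∈ B, exprVec b ≤ₖ f) :
    unionVecs B ≤ₖ f :=
  unionList_leq fun _ he => by
    obtain ⟨b, hb, rfl⟩ := List.mem_map.mp he
    exact h b (Finset.mem_toList.mp hb)

theorem unionVecs_empty : unionVecs (∅ : Finset (α → ℕ)) ≡ .zero := by
  rw [unionVecs, Finset.toList_empty]
  exact .refl _

theorem unionVecs_union (B C : Finset (α → ℕ)) :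
    unionVecs (B ∪ C) ≡ (unionVecs B).union (unionVecs C) := by
  refine leq.antisymm (unionVecs_leq fun b hb => ?_)
    (union_leq (unionVecs_leq fun b hb => leq_unionVecs (Finset.mem_union_left _ hb))
      (unionVecs_leq fun b hb => leq_unionVecs (Finset.mem_union_right _ hb)))
  rcases Finset.mem_union.mp hb with h | h
  · exact (leq_unionVecs h).trans (leq_union_left _ _)
  · exact (leq_unionVecs h).trans (leq_union_right _ _)

theorem unionVecs_insert (u : α → ℕ) (B : Finset (α → ℕ)) :
    unionVecs (insert u B) ≡ (exprVec u).union (unionVecs B) := by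
  refine leq.antisymm (unionVecs_leq fun b hb => ?_)
    (union_leq (leq_unionVecs (Finset.mem_insert_self u B))
      (unionVecs_leq fun b hb => leq_unionVecs (Finset.mem_insert_of_mem hb)))
  rcases Finset.mem_insert.mp hb with rfl | h
  · exact leq_union_left _ _
  · exact (leq_unionVecs h).trans (leq_union_right _ _)


theorem linExpr_empty (u : α → ℕ) : linExpr u ∅ ≡ exprVec u :=
  (CKA.mul_congr (.refl _) ((CKA.star_congr unionVecs_empty).trans .star_zero)).trans (.mul_one _)

theorem exprVec_eq_semiLin (u : α → ℕ) : exprVec u ≡ semiLin [(u, ∅)] :=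
  ((CKA.union_zero _).trans (linExpr_empty u)).symm

theorem linExpr_mul_linExpr (u v : α → ℕ) (B C : Finset (α → ℕ)) :
    (linExpr u B).mul (linExpr v C) ≡ linExpr (u + v) (B ∪ C) := calc
  _ ≡ ((exprVec u).mul (exprVec v)).mul ((unionVecs B).star.mul (unionVecs C).star) :=
    .mul_mul_mul_comm _ _ _ _
  _ ≡ linExpr (u + v) (B ∪ C) :=
    .mul_congr (exprVec_add u v).symm
      ((CKA.star_union _ _).symm.trans (.star_congr (unionVecs_union B C).symm))

theorem linExpr_star (u : α → ℕ) (B : Finset (α → ℕ)) :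
    (linExpr u B).star ≡ semiLin [(0, ∅), (u, insert u B)] :=
  (CKA.star_mul_star _ _).trans (.union_congr ((linExpr_empty 0).trans exprVec_zero).symm
    ((CKA.union_zero _).trans (.mul_congr (.refl _) (.star_congr (unionVecs_insert u B)))).symm)

theorem semiLin_append (L₁ L₂ : List ((α → ℕ) × Finset (α → ℕ))) :
    semiLin (L₁ ++ L₂) ≡ (semiLin L₁).union (semiLin L₂) := by
  rw [semiLin, List.map_append]
  exact unionList_append _ _

theorem linExpr_mul_semiLin (u : α → ℕ) (B : Finset (α → ℕ))
    (L : List ((α → ℕ) × Finset (α → ℕ))) :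
    (linExpr u B).mul (semiLin L) ≡ semiLin (L.map fun p => (u + p.1, B ∪ p.2)) := by
  induction L with
  | nil => exact .mul_zero _
  | cons p L ih =>
    exact (CKA.left_distrib _ _ _).trans (.union_congr (linExpr_mul_linExpr _ _ _ _) ih)

theorem semiLin_mul_semiLin (L₁ L₂ : List ((α → ℕ) × Finset (α → ℕ))) :
    ∃ L, (semiLin L₁).mul (semiLin L₂) ≡ semiLin L := by
  induction L₁ with
  | nil => exact ⟨[], .zero_mul _⟩
  | cons p L₁ ih =>
    obtain ⟨L, hL⟩ := ih
    exact ⟨_, (CKA.right_distrib _ _ _).trans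
      ((CKA.union_congr (linExpr_mul_semiLin p.1 p.2 L₂) hL).trans (semiLin_append _ L).symm)⟩

theorem semiLin_star (L : List ((α → ℕ) × Finset (α → ℕ))) :
    ∃ L', (semiLin L).star ≡ semiLin L' := by
  induction L with
  | nil => exact ⟨_, CKA.star_zero.trans (exprVec_zero.symm.trans (exprVec_eq_semiLin 0))⟩
  | cons p L ih =>
    obtain ⟨L', hL'⟩ := ih
    obtain ⟨L'', hL''⟩ := semiLin_mul_semiLin [(0, ∅), (p.1, insert p.1 p.2)] L'
    exact ⟨L'', calc
      (semiLin (p :: L)).star ≡ (linExpr p.1 p.2).star.mul (semiLin L).star := .star_union _ _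
      _ ≡ (semiLin [(0, ∅), (p.1, insert p.1 p.2)]).mul (semiLin L') :=
        .mul_congr (linExpr_star p.1 p.2) hL'
      _ ≡ semiLin L'' := hL''⟩

end Parikh

variable [Fintype α] [DecidableEq α]

/-- Every commutative regular expression is provably equal to a semilinear
expression, i.e. a finite union of linear expressions. -/
theorem decomp_semilinear (e : CRE α) :
    ∃ L : List ((α → ℕ) × Finset (α → ℕ)), CKA e (semiLin L) := by
  induction e with
  | zero => exact ⟨[], .refl _⟩
  | one => exact ⟨_, exprVec_zero.symm.trans (exprVec_eq_semiLin 0)⟩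
  | letter a => exact ⟨_, (exprVec_single a).symm.trans (exprVec_eq_semiLin _)⟩
  | mul e f ihe ihf =>
    obtain ⟨L₁, h₁⟩ := ihe
    obtain ⟨L₂, h₂⟩ := ihf
    obtain ⟨L, h⟩ := semiLin_mul_semiLin L₁ L₂
    exact ⟨L, (CKA.mul_congr h₁ h₂).trans h⟩
  | union e f ihe ihf =>
    obtain ⟨L₁, h₁⟩ := ihe
    obtain ⟨L₂, h₂⟩ := ihf
    exact ⟨L₁ ++ L₂, (CKA.union_congr h₁ h₂).trans (semiLin_append L₁ L₂).symm⟩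
  | star e ih =>
    obtain ⟨L₁, h₁⟩ := ih
    obtain ⟨L, h⟩ := semiLin_star L₁
    exact ⟨L, (CKA.star_congr h₁).trans h⟩

end CKAnote
end
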